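/- arXiv:1309.1071 — 3 statements merged into one kernel-verified Lean document; each statement's English description precedes it below -/
import Mathlib

section
/- Let L/K be a cyclic extension of number fields of prime degree with Galois group generated by σ, and let ν : Am(L/K) → (E_K ∩ N_{L/K}(L^×))/N_{L/K}(E_L) be the homomorphism sending the class of 𝔞 with 𝔞^σ = (α)·𝔞 to the coset of N_{L/K}(α). Then the kernel of ν is exactly the group Am_st(L/K) of strongly ambiguous ideal classes. -/
/-!
If `𝔞^σ = (α)𝔞`, applying `σ` repeatedly around the whole cyclic Galois group gives
`(N α) = (1)`, so `N α` is a unit of `K`. If moreover `N α = N ε` for a unit `ε` of `L`, then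
`α/ε` has norm one, so by Hilbert 90 it equals `σβ/β`; the ideal `β⁻¹𝔞` lies in the class of `𝔞`
and is fixed by `σ`. Conversely, a `σ`-fixed representative can be used with `α = 1`.
-/

open NumberField
open scoped nonZeroDivisors

open FractionalIdeal

section PartialNorm

variable {G M : Type*} [Monoid G] [CommMonoid M] [MulDistribMulAction G M]

def partialNorm (g : G) (a : M) (m : ℕ) : M :=
  ∏ i ∈ Finset.range m, g ^ i • a

theorem partialNorm_zero (g : G) (a : M) : partialNorm g a 0 = 1 :=
  Finset.prod_range_zero _

theorem partialNorm_one (g : G) (a : M) : partialNorm g a 1 = a := by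
  simp [partialNorm]

theorem partialNorm_add (g : G) (a : M) (m k : ℕ) :
    partialNorm g a (m + k) = partialNorm g a m * g ^ m • partialNorm g a k := by
  simp only [partialNorm, Finset.prod_range_add, Finset.smul_prod', pow_add, mul_smul]

theorem partialNorm_mul_eq_one {g : G} {a : M} {n : ℕ} (h : partialNorm g a n = 1) (t : ℕ) :
    partialNorm g a (n * t) = 1 := by
  induction t with
  | zero => exact partialNorm_zero g a
  | succ t ih => rw [Nat.mul_succ, partialNorm_add, ih, h, smul_one, mul_one]

theorem partialNorm_mod_orderOf {g : G} {a : M} (h : partialNorm g a (orderOf g) = 1) (m : ℕ) :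
    partialNorm g a (m % orderOf g) = partialNorm g a m := by
  conv_rhs => rw [← Nat.mod_add_div m (orderOf g)]
  rw [partialNorm_add, partialNorm_mul_eq_one h, smul_one, mul_one]

theorem pow_apply_eq_partialNorm_mul {A : Type*} [CommMonoid A] (F : A ≃* A) (P : M →* A) {g : G}
    (hP : ∀ x, F (P x) = P (g • x)) {I : A} {a : M} (hI : F I = P a * I) (m : ℕ) :
    (F ^ m) I = P (partialNorm g a m) * I := by
  induction m with
  | zero => rw [partialNorm_zero, map_one, one_mul]; rfl
  | succ m ih =>
    rw [pow_succ', MulAut.mul_apply, ih, map_mul, hP, hI, add_comm, partialNorm_add,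
      partialNorm_one, pow_one, map_mul]
    ac_rfl

end PartialNorm

section PartialNormPeriodic

variable {G M : Type*} [LeftCancelMonoid G] [CommMonoid M] [MulDistribMulAction G M]

theorem partialNorm_eq_of_pow_eq {g : G} {a : M}
    (h : partialNorm g a (orderOf g) = 1) {m k : ℕ} (hmk : g ^ m = g ^ k) :
    partialNorm g a m = partialNorm g a k := by
  rw [← partialNorm_mod_orderOf h m, ← partialNorm_mod_orderOf h k,
    (pow_eq_pow_iff_modEq.1 hmk : m % orderOf g = k % orderOf g)]

end PartialNormPeriodic

section CyclicGalois

variable {K L : Type*} [Field K] [Field L] [Algebra K L] [FiniteDimensional K L] [IsGalois K L]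
  {σ : L ≃ₐ[K] L}

theorem prod_range_orderOf_pow_apply (hσ : ∀ τ : L ≃ₐ[K] L, τ ∈ Subgroup.zpowers σ) (x : L) :
    ∏ i ∈ Finset.range (orderOf σ), (σ ^ i) x = algebraMap K L (Algebra.norm K x) := by
  classical
  rw [Algebra.norm_eq_prod_automorphisms, ← IsCyclic.image_range_orderOf hσ,
    Finset.prod_image fun i hi j hj => pow_injOn_Iio_orderOf (by simpa using hi) (by simpa using hj)]

theorem coe_partialNorm_orderOf (hσ : ∀ τ : L ≃ₐ[K] L, τ ∈ Subgroup.zpowers σ) (x : Lˣ) :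
    ((partialNorm σ x (orderOf σ) : Lˣ) : L) = algebraMap K L (Algebra.norm K (x : L)) := by
  rw [partialNorm, Units.coe_prod, ← prod_range_orderOf_pow_apply hσ]
  rfl

/-- Hilbert's Theorem 90 for a cyclic extension, deduced from the vanishing of `H¹(Gal(L/K), Lˣ)`:
`σ ^ m ↦ partialNorm σ η m` is a well-defined cocycle because `partialNorm σ η (orderOf σ)` is the
norm of `η`. -/
theorem exists_smul_div_eq_of_norm_eq_one (hσ : ∀ τ : L ≃ₐ[K] L, τ ∈ Subgroup.zpowers σ)
    {η : Lˣ} (hη : Algebra.norm K (η : L) = 1) : ∃ β : Lˣ, σ • β / β = η := by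
  have hη' : partialNorm σ η (orderOf σ) = 1 := by
    ext
    rw [coe_partialNorm_orderOf hσ, hη, map_one, Units.val_one]
  have hexp : ∀ τ : L ≃ₐ[K] L, ∃ m : ℕ, σ ^ m = τ := fun τ => mem_powers_iff_mem_zpowers.2 (hσ τ)
  choose e he using hexp
  have hcocycle : groupCohomology.IsMulCocycle₁ fun τ => partialNorm σ η (e τ) := by
    intro g h
    dsimp only
    rw [partialNorm_eq_of_pow_eq hη' (k := e g + e h) (by rw [pow_add, he, he, he]),
      partialNorm_add, he, mul_comm]
  obtain ⟨β, hβ⟩ := groupCohomology.isMulCoboundary₁_of_isMulCocycle₁_of_aut_to_units _ hcocycle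
  refine ⟨β, (hβ σ).trans ?_⟩
  dsimp only
  rw [partialNorm_eq_of_pow_eq hη' (k := 1) (by rw [he, pow_one]), partialNorm_one]

end CyclicGalois

section ClassGroup

variable {R K : Type*} [CommRing R] [IsDomain R] [Field K] [Algebra R K] [IsFractionRing R K]

theorem toPrincipalIdeal_eq_one_iff {x : Kˣ} :
    toPrincipalIdeal R K x = 1 ↔ ∃ u : Rˣ, algebraMap R K u = x := by
  rw [toPrincipalIdeal_eq_iff, Units.val_one, ← spanSingleton_one, eq_comm,
    spanSingleton_eq_spanSingleton]
  simp only [Units.smul_def, Algebra.smul_def, mul_one]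

theorem ClassGroup.mk_eq_one_iff_mem_range {I : (FractionalIdeal R⁰ K)ˣ} :
    ClassGroup.mk K I = 1 ↔ I ∈ (toPrincipalIdeal R K).range := by
  rw [ClassGroup.mk_eq_one_iff, isPrincipal_iff, mem_principal_ideals_iff]
  exact exists_congr fun _ => eq_comm

theorem ClassGroup.mk_toPrincipalIdeal (x : Kˣ) : ClassGroup.mk K (toPrincipalIdeal R K x) = 1 :=
  ClassGroup.mk_eq_one_iff_mem_range.2 ⟨x, rfl⟩

theorem ClassGroup.mk_eq_mk_iff {I J : (FractionalIdeal R⁰ K)ˣ} :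
    ClassGroup.mk K J = ClassGroup.mk K I ↔ ∃ x : Kˣ, J = toPrincipalIdeal R K x * I := by
  rw [← div_eq_one, ← map_div, ClassGroup.mk_eq_one_iff_mem_range]
  exact exists_congr fun _ => eq_div_iff_mul_eq'.trans eq_comm

end ClassGroup

section IdealImage

variable {K L : Type*} [Field K] [Field L] [NumberField L] [Algebra K L]

def IsImageUnder (σ : L ≃ₐ[K] L) (F : (FractionalIdeal (𝓞 L)⁰ L)ˣ ≃* (FractionalIdeal (𝓞 L)⁰ L)ˣ) :
    Prop :=
  ∀ (I : (FractionalIdeal (𝓞 L)⁰ L)ˣ) (x : L),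
    x ∈ (F I : FractionalIdeal (𝓞 L)⁰ L) ↔ ∃ y ∈ (I : FractionalIdeal (𝓞 L)⁰ L), σ y = x

variable {σ : L ≃ₐ[K] L} {F : (FractionalIdeal (𝓞 L)⁰ L)ˣ ≃* (FractionalIdeal (𝓞 L)⁰ L)ˣ}

theorem IsImageUnder.apply_toPrincipalIdeal (hF : IsImageUnder σ F) (x : Lˣ) :
    F (toPrincipalIdeal (𝓞 L) L x) = toPrincipalIdeal (𝓞 L) L (σ • x) := by
  let σ𝓞 := RingOfIntegers.mapRingEquiv (σ : L ≃+* L)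
  have hσ_smul (b : 𝓞 L) : σ (b • (x : L)) = σ𝓞 b • ((σ • x : Lˣ) : L) := by
    rw [Algebra.smul_def, Algebra.smul_def, map_mul]
    rfl
  ext z
  rw [hF, coe_toPrincipalIdeal, coe_toPrincipalIdeal]
  simp only [mem_spanSingleton]
  constructor
  · rintro ⟨_, ⟨b, rfl⟩, rfl⟩
    exact ⟨σ𝓞 b, (hσ_smul b).symm⟩
  · rintro ⟨b, rfl⟩
    obtain ⟨b, rfl⟩ := σ𝓞.surjective b
    exact ⟨b • (x : L), ⟨b, rfl⟩, hσ_smul b⟩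

theorem IsImageUnder.pow (hF : IsImageUnder σ F) (n : ℕ) : IsImageUnder (σ ^ n) (F ^ n) := by
  induction n with
  | zero => intro I x; simp
  | succ n ih =>
    intro I x
    rw [pow_succ', MulAut.mul_apply, hF]
    simp only [ih I, pow_succ', AlgEquiv.mul_apply, exists_exists_and_eq_and]

theorem IsImageUnder.pow_orderOf (hF : IsImageUnder σ F) : F ^ orderOf σ = 1 := by
  have h := hF.pow (orderOf σ)
  rw [pow_orderOf_eq_one] at h
  ext I x
  rw [h I x]
  simp

end IdealImage

section Ambiguous

variable {K L : Type*} [Field K] [Field L] [Algebra K L]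

theorem exists_unit_of_algebraMap_eq_unit {x : K} {e : (𝓞 L)ˣ}
    (he : algebraMap (𝓞 L) L e = algebraMap K L x) : ∃ u : (𝓞 K)ˣ, algebraMap (𝓞 K) K u = x := by
  have hx : IsIntegral ℤ x :=
    (isIntegral_algebraMap_iff (algebraMap K L).injective).1 (he ▸ (e : 𝓞 L).isIntegral_coe)
  have hy : algebraMap (𝓞 K) (𝓞 L) ⟨x, hx⟩ = e := RingOfIntegers.ext he.symm
  obtain ⟨u, hu⟩ := (isUnit_map_iff (algebraMap (𝓞 K) (𝓞 L)) _).1 (hy ▸ e.isUnit)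
  exact ⟨u, by rw [hu]; rfl⟩

variable [NumberField L] [FiniteDimensional K L] [IsGalois K L] {σ : L ≃ₐ[K] L}
  {F : (FractionalIdeal (𝓞 L)⁰ L)ˣ ≃* (FractionalIdeal (𝓞 L)⁰ L)ˣ} {I : (FractionalIdeal (𝓞 L)⁰ L)ˣ}
  {α : Lˣ}

theorem exists_unit_eq_norm_of_apply_eq (hσ : ∀ τ : L ≃ₐ[K] L, τ ∈ Subgroup.zpowers σ)
    (hF : IsImageUnder σ F) (hI : F I = toPrincipalIdeal (𝓞 L) L α * I) :
    ∃ u : (𝓞 K)ˣ, algebraMap (𝓞 K) K u = Algebra.norm K (α : L) := by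
  have h := pow_apply_eq_partialNorm_mul F _ hF.apply_toPrincipalIdeal hI (orderOf σ)
  rw [hF.pow_orderOf, MulAut.one_apply, right_eq_mul, toPrincipalIdeal_eq_one_iff] at h
  obtain ⟨e, he⟩ := h
  exact exists_unit_of_algebraMap_eq_unit (he.trans (coe_partialNorm_orderOf hσ α))

theorem exists_apply_eq_self_of_norm_eq_norm_unit (hσ : ∀ τ : L ≃ₐ[K] L, τ ∈ Subgroup.zpowers σ)
    (hF : IsImageUnder σ F) (hI : F I = toPrincipalIdeal (𝓞 L) L α * I) {ε : (𝓞 L)ˣ}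
    (hε : Algebra.norm K ((ε : 𝓞 L) : L) = Algebra.norm K (α : L)) :
    ∃ J, ClassGroup.mk L J = ClassGroup.mk L I ∧ F J = J := by
  let εL : Lˣ := Units.map (algebraMap (𝓞 L) L) ε
  have hεL : toPrincipalIdeal (𝓞 L) L εL = 1 := toPrincipalIdeal_eq_one_iff.2 ⟨ε, rfl⟩
  obtain ⟨β, hβ⟩ : ∃ β : Lˣ, σ • β / β = α / εL := by
    refine exists_smul_div_eq_of_norm_eq_one hσ ?_
    rw [Units.val_div_eq_div_val, div_eq_mul_inv, map_mul, Algebra.norm_inv, ← hε]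
    exact mul_inv_cancel₀ (Algebra.norm_ne_zero_iff.2 εL.ne_zero)
  refine ⟨(toPrincipalIdeal (𝓞 L) L β)⁻¹ * I, ?_, ?_⟩
  · rw [map_mul, map_inv, ClassGroup.mk_toPrincipalIdeal, inv_one, one_mul]
  · have hα : α = σ • β / β * εL := by rw [hβ, div_mul_cancel]
    rw [map_mul, map_inv, hF.apply_toPrincipalIdeal, hI, hα, map_mul, map_div, hεL, mul_one,
      div_eq_mul_inv, mul_assoc, inv_mul_cancel_left]

end Ambiguous

theorem nu_kernel_eq_strongly_ambiguous_general
    (K L : Type*) [Field K] [Field L] [NumberField L]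
    [Algebra K L] [IsGalois K L] [FiniteDimensional K L]
    (σ : L ≃ₐ[K] L) (hσ : ∀ τ : L ≃ₐ[K] L, τ ∈ Subgroup.zpowers σ)
    (Fσ : (FractionalIdeal (𝓞 L)⁰ L)ˣ ≃* (FractionalIdeal (𝓞 L)⁰ L)ˣ)
    (hFσ : ∀ (I : (FractionalIdeal (𝓞 L)⁰ L)ˣ) (x : L),
      x ∈ (Fσ I : FractionalIdeal (𝓞 L)⁰ L) ↔
        ∃ y ∈ (I : FractionalIdeal (𝓞 L)⁰ L), σ y = x)
    (Am : Subgroup (ClassGroup (𝓞 L)))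
    (hAm : ∀ c : ClassGroup (𝓞 L), c ∈ Am ↔
      ∀ I : (FractionalIdeal (𝓞 L)⁰ L)ˣ, ClassGroup.mk L I = c → ClassGroup.mk L (Fσ I) = c)
    (Amst : Subgroup (ClassGroup (𝓞 L)))
    (hAmst : ∀ c : ClassGroup (𝓞 L), c ∈ Amst ↔
      ∃ I : (FractionalIdeal (𝓞 L)⁰ L)ˣ, ClassGroup.mk L I = c ∧ Fσ I = I)
    (EN : Subgroup (𝓞 K)ˣ)
    (hEN : EN = ((Units.map (Algebra.norm K : L →* K)).range).comap
      (Units.map (algebraMap (𝓞 K) K).toMonoidHom))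
    (NE : Subgroup (𝓞 K)ˣ)
    (hNE : NE = (Units.map (RingOfIntegers.norm K : 𝓞 L →* 𝓞 K)).range)
    (ν : Am →* (EN ⧸ NE.subgroupOf EN))
    (hν : ∀ (I : (FractionalIdeal (𝓞 L)⁰ L)ˣ) (α : Lˣ) (hI : ClassGroup.mk L I ∈ Am),
      Fσ I = toPrincipalIdeal (𝓞 L) L α * I →
        ∀ u : EN, algebraMap (𝓞 K) K ((u : (𝓞 K)ˣ) : 𝓞 K) = Algebra.norm K (α : L) →
          ν ⟨ClassGroup.mk L I, hI⟩ = QuotientGroup.mk u) :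
    ν.ker = Amst.subgroupOf Am := by
  ext ⟨c, hc⟩
  obtain ⟨I, rfl⟩ : ∃ I, ClassGroup.mk L I = c :=
    ClassGroup.induction (K := L) (fun I => ⟨I, rfl⟩) c
  obtain ⟨α, hα⟩ := ClassGroup.mk_eq_mk_iff.1 ((hAm _).1 hc I rfl)
  obtain ⟨u, hu⟩ := exists_unit_eq_norm_of_apply_eq hσ hFσ hα
  have hu_mem : u ∈ EN := hEN ▸ ⟨α, Units.ext hu.symm⟩
  rw [MonoidHom.mem_ker, Subgroup.mem_subgroupOf, hAmst]
  constructor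
  · intro hker
    rw [hν I α hc hα ⟨u, hu_mem⟩ hu, QuotientGroup.eq_one_iff, Subgroup.mem_subgroupOf, hNE] at hker
    obtain ⟨ε, hε : Units.map (RingOfIntegers.norm K : 𝓞 L →* 𝓞 K) ε = u⟩ := hker
    refine exists_apply_eq_self_of_norm_eq_norm_unit hσ hFσ hα (ε := ε) ?_
    rw [← hu, ← RingOfIntegers.coe_norm, ← hε]
    rfl
  · rintro ⟨J, hJ, hFJ⟩
    have hJ_mem : ClassGroup.mk L J ∈ Am := hJ ▸ hc
    rw [show (⟨_, hc⟩ : Am) = ⟨_, hJ_mem⟩ from Subtype.ext hJ.symm,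
      hν J 1 hJ_mem (by rw [map_one, one_mul, hFJ]) 1 (by simp)]
    rfl

/-- `L/K` is a cyclic extension of number fields of prime degree `ℓ`, with Galois group
generated by `σ`, acting on invertible fractional ideals of `L` via `Fσ` (characterized
by `hFσ`).  `Am` is the subgroup of ambiguous ideal classes, `Amst` the subgroup of
strongly ambiguous classes, `EN = E_K ∩ N_{L/K}L^×` and `NE = N_{L/K}E_L`.  If
`ν : Am(L/K) → (E_K ∩ N L^×)/N E_L` is the homomorphism sending the class of `𝔞` with
`𝔞^σ = (α)·𝔞` to the class of `N_{L/K}(α)` (hypothesis `hν`), then the kernel of `ν`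
is exactly `Am_st(L/K)`. -/
theorem nu_kernel_eq_strongly_ambiguous
    (K L : Type*) [Field K] [Field L] [NumberField K] [NumberField L]
    [Algebra K L] [IsGalois K L] [FiniteDimensional K L]
    (ℓ : ℕ) (hℓ : ℓ.Prime) (hdeg : Module.finrank K L = ℓ)
    (σ : L ≃ₐ[K] L) (hσ : ∀ τ : L ≃ₐ[K] L, τ ∈ Subgroup.zpowers σ)
    (Fσ : (FractionalIdeal (𝓞 L)⁰ L)ˣ ≃* (FractionalIdeal (𝓞 L)⁰ L)ˣ)
    (hFσ : ∀ (I : (FractionalIdeal (𝓞 L)⁰ L)ˣ) (x : L),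
      x ∈ (Fσ I : FractionalIdeal (𝓞 L)⁰ L) ↔
        ∃ y ∈ (I : FractionalIdeal (𝓞 L)⁰ L), σ y = x)
    (Am : Subgroup (ClassGroup (𝓞 L)))
    (hAm : ∀ c : ClassGroup (𝓞 L), c ∈ Am ↔
      ∀ I : (FractionalIdeal (𝓞 L)⁰ L)ˣ, ClassGroup.mk L I = c → ClassGroup.mk L (Fσ I) = c)
    (Amst : Subgroup (ClassGroup (𝓞 L)))
    (hAmst : ∀ c : ClassGroup (𝓞 L), c ∈ Amst ↔
      ∃ I : (FractionalIdeal (𝓞 L)⁰ L)ˣ, ClassGroup.mk L I = c ∧ Fσ I = I)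
    (EN : Subgroup (𝓞 K)ˣ)
    (hEN : EN = ((Units.map (Algebra.norm K : L →* K)).range).comap
      (Units.map (algebraMap (𝓞 K) K).toMonoidHom))
    (NE : Subgroup (𝓞 K)ˣ)
    (hNE : NE = (Units.map (RingOfIntegers.norm K : 𝓞 L →* 𝓞 K)).range)
    (ν : Am →* (EN ⧸ NE.subgroupOf EN))
    (hν : ∀ (I : (FractionalIdeal (𝓞 L)⁰ L)ˣ) (α : Lˣ) (hI : ClassGroup.mk L I ∈ Am),
      Fσ I = toPrincipalIdeal (𝓞 L) L α * I →
        ∀ u : EN, algebraMap (𝓞 K) K ((u : (𝓞 K)ˣ) : 𝓞 K) = Algebra.norm K (α : L) →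
          ν ⟨ClassGroup.mk L I, hI⟩ = QuotientGroup.mk u) :
    ν.ker = Amst.subgroupOf Am :=
  nu_kernel_eq_strongly_ambiguous_general K L σ hσ Fσ hFσ Am hAm Amst hAmst EN hEN NE hNE ν hν
end

section
/- Consider a commutative diagram of abelian groups with exact rows 1 → A → B → C → 1 and 1 → A' → B' → C' → 1 and vertical homomorphisms α : A → A', β : B → B', γ : C → C', each having finite kernel and finite cokernel. Then #ker α · #ker γ · #coker β = #ker β · #coker α · #coker γ. -/
/-!
The kernels and cokernels of the vertical maps form the six-term exact sequence of the snake lemma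
`1 → ker α → ker β → ker γ → coker α → coker β → coker γ → 1`.
In an exact sequence each group has cardinality `#(image in) · #(image out)`, so the alternating
products of the cardinalities agree.
-/

open Function

theorem card_eq_card_range_mul_card_range_of_range_eq_ker {G₁ G₂ G₃ : Type*}
    [Group G₁] [Group G₂] [Group G₃] {u : G₁ →* G₂} {v : G₂ →* G₃} (huv : u.range = v.ker) :
    Nat.card G₂ = Nat.card u.range * Nat.card v.range := by
  rw [huv, ← Subgroup.index_ker, v.ker.card_mul_index]

theorem card_mul_card_mul_card_eq_of_exact {G₁ G₂ G₃ G₄ G₅ G₆ : Type*}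
    [Group G₁] [Group G₂] [Group G₃] [Group G₄] [Group G₅] [Group G₆]
    {u : G₁ →* G₂} {v : G₂ →* G₃} {d : G₃ →* G₄} {w : G₄ →* G₅} {x : G₅ →* G₆}
    (hu : Injective u) (huv : u.range = v.ker) (hvd : v.range = d.ker)
    (hdw : d.range = w.ker) (hwx : w.range = x.ker) (hx : Surjective x) :
    Nat.card G₁ * Nat.card G₃ * Nat.card G₅ = Nat.card G₂ * Nat.card G₄ * Nat.card G₆ := by
  have h₁ : Nat.card G₁ = Nat.card u.range := Nat.card_congr (MonoidHom.ofInjective hu).toEquiv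
  have h₆ : Nat.card G₆ = Nat.card x.range := by
    rw [x.range_eq_top_of_surjective hx, Subgroup.card_top]
  rw [h₁, h₆, card_eq_card_range_mul_card_range_of_range_eq_ker huv,
    card_eq_card_range_mul_card_range_of_range_eq_ker hvd,
    card_eq_card_range_mul_card_range_of_range_eq_ker hdw,
    card_eq_card_range_mul_card_range_of_range_eq_ker hwx]
  ring

namespace Snake

section Kernels

variable {A B C A' B' C' : Type*} [Group A] [Group B] [Group C] [Group A'] [Group B'] [Group C']
  {f : A →* B} {g : B →* C} {f' : A' →* B'} {g' : B' →* C'} {α : A →* A'} {β : B →* B'}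
  {γ : C →* C'}

def kerMap (h : ∀ a, f' (α a) = β (f a)) : α.ker →* β.ker :=
  (f.domRestrict α.ker).codRestrict β.ker fun a => by
    rw [MonoidHom.mem_ker, MonoidHom.domRestrict_apply, ← h, a.2, map_one]

@[simp]
theorem coe_kerMap_apply (h : ∀ a, f' (α a) = β (f a)) (a : α.ker) :
    (kerMap h a : B) = f a :=
  rfl

theorem kerMap_injective (hf : Injective f) (h : ∀ a, f' (α a) = β (f a)) :
    Injective (kerMap h) :=
  fun _ _ hab => Subtype.ext (hf (congrArg Subtype.val hab))

theorem range_kerMap_eq_ker_kerMap (hfg : f.range = g.ker) (hf' : Injective f')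
    (h₁ : ∀ a, f' (α a) = β (f a)) (h₂ : ∀ b, g' (β b) = γ (g b)) :
    (kerMap h₁).range = (kerMap h₂).ker := by
  ext b
  constructor
  · rintro ⟨a, rfl⟩
    exact Subtype.ext (hfg ▸ ⟨a, rfl⟩ : f a ∈ g.ker)
  · intro hb
    obtain ⟨a, ha⟩ : (b : B) ∈ f.range := hfg ▸ congrArg Subtype.val hb
    have ha_ker : a ∈ α.ker := hf' (by rw [h₁, ha, b.2, map_one])
    exact ⟨⟨a, ha_ker⟩, Subtype.ext ha⟩

end Kernels

section Cokernels

variable {A B C A' B' C' : Type*} [Group A] [Group B] [Group C]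
  [CommGroup A'] [CommGroup B'] [CommGroup C']
  {f : A →* B} {g : B →* C} {f' : A' →* B'} {g' : B' →* C'} {α : A →* A'} {β : B →* B'}
  {γ : C →* C'}

def cokerMap (h : ∀ a, f' (α a) = β (f a)) : A' ⧸ α.range →* B' ⧸ β.range :=
  QuotientGroup.map _ _ f' <| by
    rintro _ ⟨a, rfl⟩
    exact ⟨f a, (h a).symm⟩

@[simp]
theorem cokerMap_mk (h : ∀ a, f' (α a) = β (f a)) (a' : A') :
    cokerMap h (a' : A' ⧸ α.range) = (f' a' : B' ⧸ β.range) :=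
  rfl

theorem cokerMap_surjective (hg' : Surjective g') (h : ∀ b, g' (β b) = γ (g b)) :
    Surjective (cokerMap h) :=
  QuotientGroup.map_surjective_of_surjective _ _ _ (QuotientGroup.mk_surjective.comp hg') _

theorem range_cokerMap_eq_ker_cokerMap (hg : Surjective g) (hfg' : f'.range = g'.ker)
    (h₁ : ∀ a, f' (α a) = β (f a)) (h₂ : ∀ b, g' (β b) = γ (g b)) :
    (cokerMap h₁).range = (cokerMap h₂).ker := by
  ext q
  constructor
  · rintro ⟨p, rfl⟩
    obtain ⟨a', rfl⟩ := QuotientGroup.mk_surjective p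
    have : f' a' ∈ g'.ker := hfg' ▸ ⟨a', rfl⟩
    rw [MonoidHom.mem_ker, cokerMap_mk, cokerMap_mk, this, QuotientGroup.mk_one]
  · obtain ⟨b', rfl⟩ := QuotientGroup.mk_surjective q
    intro hq
    rw [MonoidHom.mem_ker, cokerMap_mk, QuotientGroup.eq_one_iff] at hq
    obtain ⟨c, hc⟩ := hq
    obtain ⟨b, rfl⟩ := hg c
    obtain ⟨a', ha'⟩ : b' / β b ∈ f'.range := by
      rw [hfg', MonoidHom.mem_ker, map_div, h₂, hc, div_self']
    refine ⟨a', ?_⟩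
    rw [cokerMap_mk, QuotientGroup.eq_iff_div_mem, ha']
    exact ⟨b⁻¹, by rw [map_inv, div_right_comm, div_self', one_div]⟩

theorem map_surjInv_mem_range (hg : Surjective g) (hfg' : f'.range = g'.ker)
    (h₂ : ∀ b, g' (β b) = γ (g b)) (c : γ.ker) : β (surjInv hg c) ∈ f'.range := by
  rw [hfg', MonoidHom.mem_ker, h₂, surjInv_eq hg, c.2]

noncomputable def connectingLift (hg : Surjective g) (hfg' : f'.range = g'.ker)
    (h₂ : ∀ b, g' (β b) = γ (g b)) (c : γ.ker) : A' :=
  (map_surjInv_mem_range hg hfg' h₂ c).choose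

theorem map_connectingLift (hg : Surjective g) (hfg' : f'.range = g'.ker)
    (h₂ : ∀ b, g' (β b) = γ (g b)) (c : γ.ker) :
    f' (connectingLift hg hfg' h₂ c) = β (surjInv hg c) :=
  (map_surjInv_mem_range hg hfg' h₂ c).choose_spec

theorem mk_connectingLift_eq (hf' : Injective f') (hg : Surjective g) (hfg : f.range = g.ker)
    (hfg' : f'.range = g'.ker) (h₁ : ∀ a, f' (α a) = β (f a)) (h₂ : ∀ b, g' (β b) = γ (g b))
    (c : γ.ker) {b : B} (hb : g b = c) {a' : A'} (ha' : f' a' = β b) :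
    ((connectingLift hg hfg' h₂ c : A') : A' ⧸ α.range) = a' := by
  obtain ⟨a, ha⟩ : surjInv hg c / b ∈ f.range := by
    rw [hfg, MonoidHom.mem_ker, map_div, surjInv_eq hg, hb, div_self']
  rw [QuotientGroup.eq_iff_div_mem]
  refine ⟨a, hf' ?_⟩
  rw [map_div, map_connectingLift, ha', h₁, ha, map_div]

noncomputable def connecting (hf' : Injective f') (hg : Surjective g) (hfg : f.range = g.ker)
    (hfg' : f'.range = g'.ker) (h₁ : ∀ a, f' (α a) = β (f a)) (h₂ : ∀ b, g' (β b) = γ (g b)) :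
    γ.ker →* A' ⧸ α.range :=
  MonoidHom.mk' (fun c => QuotientGroup.mk (connectingLift hg hfg' h₂ c)) fun c₁ c₂ => by
    rw [← QuotientGroup.mk_mul]
    refine mk_connectingLift_eq hf' hg hfg hfg' h₁ h₂ _
      (b := surjInv hg c₁ * surjInv hg c₂) (by simp only [map_mul, surjInv_eq hg]; rfl) ?_
    rw [map_mul, map_connectingLift, map_connectingLift, map_mul]

theorem connecting_apply (hf' : Injective f') (hg : Surjective g) (hfg : f.range = g.ker)
    (hfg' : f'.range = g'.ker) (h₁ : ∀ a, f' (α a) = β (f a)) (h₂ : ∀ b, g' (β b) = γ (g b))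
    (c : γ.ker) : connecting hf' hg hfg hfg' h₁ h₂ c = connectingLift hg hfg' h₂ c :=
  rfl

theorem connecting_eq (hf' : Injective f') (hg : Surjective g) (hfg : f.range = g.ker)
    (hfg' : f'.range = g'.ker) (h₁ : ∀ a, f' (α a) = β (f a)) (h₂ : ∀ b, g' (β b) = γ (g b))
    (c : γ.ker) {b : B} (hb : g b = c) {a' : A'} (ha' : f' a' = β b) :
    connecting hf' hg hfg hfg' h₁ h₂ c = a' :=
  mk_connectingLift_eq hf' hg hfg hfg' h₁ h₂ c hb ha'

theorem range_kerMap_eq_ker_connecting (hf' : Injective f') (hg : Surjective g)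
    (hfg : f.range = g.ker) (hfg' : f'.range = g'.ker) (h₁ : ∀ a, f' (α a) = β (f a))
    (h₂ : ∀ b, g' (β b) = γ (g b)) :
    (kerMap h₂).range = (connecting hf' hg hfg hfg' h₁ h₂).ker := by
  ext c
  constructor
  · rintro ⟨b, rfl⟩
    rw [MonoidHom.mem_ker, connecting_eq hf' hg hfg hfg' h₁ h₂ _ (b := b) rfl (a' := 1)
      (by rw [map_one, b.2]), QuotientGroup.mk_one]
  · intro hc
    rw [MonoidHom.mem_ker, connecting_apply, QuotientGroup.eq_one_iff] at hc
    obtain ⟨a, ha⟩ := hc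
    have hfa : g (f a) = 1 := (hfg ▸ ⟨a, rfl⟩ : f a ∈ g.ker)
    have hb : surjInv hg c / f a ∈ β.ker := by
      rw [MonoidHom.mem_ker, map_div, ← h₁, ha, map_connectingLift, div_self']
    exact ⟨⟨_, hb⟩, Subtype.ext (by rw [coe_kerMap_apply, map_div, surjInv_eq hg, hfa, div_one])⟩

theorem range_connecting_eq_ker_cokerMap (hf' : Injective f') (hg : Surjective g)
    (hfg : f.range = g.ker) (hfg' : f'.range = g'.ker) (h₁ : ∀ a, f' (α a) = β (f a))
    (h₂ : ∀ b, g' (β b) = γ (g b)) :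
    (connecting hf' hg hfg hfg' h₁ h₂).range = (cokerMap h₁).ker := by
  ext q
  constructor
  · rintro ⟨c, rfl⟩
    rw [MonoidHom.mem_ker, connecting_apply, cokerMap_mk, map_connectingLift,
      QuotientGroup.eq_one_iff]
    exact ⟨_, rfl⟩
  · obtain ⟨a', rfl⟩ := QuotientGroup.mk_surjective q
    intro hq
    rw [MonoidHom.mem_ker, cokerMap_mk, QuotientGroup.eq_one_iff] at hq
    obtain ⟨b, hb⟩ := hq
    have hgb : g b ∈ γ.ker := by
      rw [MonoidHom.mem_ker, ← h₂, hb, ← MonoidHom.mem_ker, ← hfg']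
      exact ⟨a', rfl⟩
    exact ⟨⟨g b, hgb⟩, connecting_eq hf' hg hfg hfg' h₁ h₂ _ rfl hb.symm⟩

end Cokernels

end Snake

theorem snake_kernel_cokernel_identity_general
    {A B C A' B' C' : Type*}
    [CommGroup A] [CommGroup B] [CommGroup C]
    [CommGroup A'] [CommGroup B'] [CommGroup C']
    (f : A →* B) (g : B →* C) (f' : A' →* B') (g' : B' →* C')
    (hf : Function.Injective f) (hg : Function.Surjective g) (hfg : f.range = g.ker)
    (hf' : Function.Injective f') (hg' : Function.Surjective g') (hfg' : f'.range = g'.ker)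
    (α : A →* A') (β : B →* B') (γ : C →* C')
    (hcomm₁ : f'.comp α = β.comp f) (hcomm₂ : g'.comp β = γ.comp g) :
    Nat.card α.ker * Nat.card γ.ker * Nat.card (B' ⧸ β.range) =
      Nat.card β.ker * Nat.card (A' ⧸ α.range) * Nat.card (C' ⧸ γ.range) := by
  have h₁ : ∀ a, f' (α a) = β (f a) := DFunLike.congr_fun hcomm₁
  have h₂ : ∀ b, g' (β b) = γ (g b) := DFunLike.congr_fun hcomm₂
  exact card_mul_card_mul_card_eq_of_exact (Snake.kerMap_injective hf h₁)
    (Snake.range_kerMap_eq_ker_kerMap hfg hf' h₁ h₂)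
    (Snake.range_kerMap_eq_ker_connecting hf' hg hfg hfg' h₁ h₂)
    (Snake.range_connecting_eq_ker_cokerMap hf' hg hfg hfg' h₁ h₂)
    (Snake.range_cokerMap_eq_ker_cokerMap hg hfg' h₁ h₂)
    (Snake.cokerMap_surjective hg' h₂)

/-- Given a commutative diagram of abelian groups with exact rows
`1 → A → B → C → 1` and `1 → A' → B' → C' → 1` and vertical maps
`α : A → A'`, `β : B → B'`, `γ : C → C'` with finite kernels and cokernels, one has
`#ker α · #ker γ · #coker β = #ker β · #coker α · #coker γ`. -/
theorem snake_kernel_cokernel_identity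
    {A B C A' B' C' : Type*}
    [CommGroup A] [CommGroup B] [CommGroup C]
    [CommGroup A'] [CommGroup B'] [CommGroup C']
    (f : A →* B) (g : B →* C) (f' : A' →* B') (g' : B' →* C')
    (hf : Function.Injective f) (hg : Function.Surjective g) (hfg : f.range = g.ker)
    (hf' : Function.Injective f') (hg' : Function.Surjective g') (hfg' : f'.range = g'.ker)
    (α : A →* A') (β : B →* B') (γ : C →* C')
    (hcomm₁ : f'.comp α = β.comp f) (hcomm₂ : g'.comp β = γ.comp g)
    (hkα : Finite α.ker) (hkβ : Finite β.ker) (hkγ : Finite γ.ker)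
    (hcα : Finite (A' ⧸ α.range)) (hcβ : Finite (B' ⧸ β.range))
    (hcγ : Finite (C' ⧸ γ.range)) :
    Nat.card α.ker * Nat.card γ.ker * Nat.card (B' ⧸ β.range) =
      Nat.card β.ker * Nat.card (A' ⧸ α.range) * Nat.card (C' ⧸ γ.range) :=
  snake_kernel_cokernel_identity_general f g f' g' hf hg hfg hf' hg' hfg' α β γ hcomm₁ hcomm₂
end

section
/- Let L/K be a cyclic extension of number fields with Galois group generated by σ, let H_L^G be the group of G-invariant principal fractional ideals of L, H̃_K the group of principal fractional ideals of L generated by elements of K^×, and Δ = {α ∈ L^× : α^{1-σ} ∈ E_L}. Then (H_L^G : H̃_K) = (Δ : K^×·E_L). -/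
open NumberField
open scoped nonZeroDivisors

/-- The subgroup of elements fixed by a group automorphism. -/
def fixedSubgroup {G : Type*} [Group G] (e : G ≃* G) : Subgroup G where
  carrier := {x | e x = x}
  one_mem' := map_one e
  mul_mem' {a b} ha hb := by
    simp only [Set.mem_setOf_eq, map_mul] at *; rw [ha, hb]
  inv_mem' {a} ha := by
    simp only [Set.mem_setOf_eq, map_inv] at *; rw [ha]

/-!
`x ↦ (x)` maps `L^×` onto `H_L` with kernel `E_L`, and `(x)` is `σ`-invariant iff
`(x^σ) = (x)` iff `x^{1-σ} ∈ E_L`. So `Δ` is the full preimage of `H_L^G` and `K^×·E_L` that of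
`H̃_K`, and taking preimages under a surjection preserves relative indices.
-/

theorem MonoidHom.range_inf_fixedSubgroup_eq_map {G H : Type*} [CommGroup G] [Group H]
    (f : G →* H) (s : G →* G) (e : H ≃* H) (he : ∀ x, e (f x) = f (s x)) :
    f.range ⊓ fixedSubgroup e = (f.ker.comap (MonoidHom.id G * s⁻¹)).map f := by
  have key (x : G) : f x ∈ fixedSubgroup e ↔ x ∈ f.ker.comap (MonoidHom.id G * s⁻¹) := by
    change e (f x) = f x ↔ f (x * (s x)⁻¹) = 1
    rw [he, map_mul, map_inv, mul_inv_eq_one, eq_comm]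
  ext y
  constructor
  · rintro ⟨⟨x, rfl⟩, hx⟩
    exact ⟨x, (key x).mp hx, rfl⟩
  · rintro ⟨x, hx, rfl⟩
    exact ⟨⟨x, rfl⟩, (key x).mpr hx⟩

open FractionalIdeal in
theorem ker_toPrincipalIdeal (R K : Type*) [CommRing R] [IsDomain R] [Field K] [Algebra R K]
    [IsFractionRing R K] :
    (toPrincipalIdeal R K).ker = (Units.map (algebraMap R K).toMonoidHom).range := by
  ext x
  rw [MonoidHom.mem_ker, ← Units.val_inj, coe_toPrincipalIdeal, Units.val_one,
    ← spanSingleton_one, eq_comm, spanSingleton_eq_spanSingleton]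
  constructor
  · rintro ⟨z, hz⟩
    exact ⟨z, Units.ext (by simpa [Units.smul_def, Algebra.smul_def] using hz)⟩
  · rintro ⟨z, rfl⟩
    exact ⟨z, by simp [Units.smul_def, Algebra.smul_def]⟩

open FractionalIdeal RingOfIntegers in
theorem apply_toPrincipalIdeal_of_mem_iff {L : Type*} [Field L] [NumberField L] (σ : L ≃+* L)
    (F : (FractionalIdeal (𝓞 L)⁰ L)ˣ → (FractionalIdeal (𝓞 L)⁰ L)ˣ)
    (hF : ∀ (I : (FractionalIdeal (𝓞 L)⁰ L)ˣ) (x : L),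
      x ∈ (F I : FractionalIdeal (𝓞 L)⁰ L) ↔ ∃ y ∈ (I : FractionalIdeal (𝓞 L)⁰ L), σ y = x)
    (x : Lˣ) :
    F (toPrincipalIdeal (𝓞 L) L x) = toPrincipalIdeal (𝓞 L) L (Units.map σ.toMonoidHom x) := by
  refine Units.ext (FractionalIdeal.ext fun z => ?_)
  simp only [hF, coe_toPrincipalIdeal, mem_spanSingleton]
  constructor
  · rintro ⟨y, ⟨c, rfl⟩, rfl⟩
    exact ⟨mapRingEquiv σ c, by simp [Algebra.smul_def]⟩
  · rintro ⟨c, rfl⟩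
    exact ⟨(mapRingEquiv σ).symm c • (x : L), ⟨_, rfl⟩, by simp [Algebra.smul_def]⟩

theorem index_principal_invariant_eq_index_Delta_general
    (K L : Type*) [Field K] [Field L] [NumberField L]
    [Algebra K L]
    (σ : L ≃ₐ[K] L)
    (Fσ : (FractionalIdeal (𝓞 L)⁰ L)ˣ ≃* (FractionalIdeal (𝓞 L)⁰ L)ˣ)
    (hFσ : ∀ (I : (FractionalIdeal (𝓞 L)⁰ L)ˣ) (x : L),
      x ∈ (Fσ I : FractionalIdeal (𝓞 L)⁰ L) ↔
        ∃ y ∈ (I : FractionalIdeal (𝓞 L)⁰ L), σ y = x) :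
    Subgroup.relIndex
        (((toPrincipalIdeal (𝓞 L) L).comp (Units.map (algebraMap K L).toMonoidHom)).range)
        ((toPrincipalIdeal (𝓞 L) L).range ⊓ fixedSubgroup Fσ)
      = Subgroup.relIndex
          ((Units.map (algebraMap K L).toMonoidHom).range ⊔
            (Units.map (algebraMap (𝓞 L) L).toMonoidHom).range)
          (Subgroup.comap
            (MonoidHom.id Lˣ * (Units.map σ.toRingEquiv.toMonoidHom)⁻¹)
            ((Units.map (algebraMap (𝓞 L) L).toMonoidHom).range)) := by
  have hσ_principal := apply_toPrincipalIdeal_of_mem_iff σ.toRingEquiv Fσ hFσ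
  rw [MonoidHom.range_comp, (toPrincipalIdeal (𝓞 L) L).range_inf_fixedSubgroup_eq_map _ Fσ
      hσ_principal, ← Subgroup.relIndex_comap, Subgroup.comap_map_eq, ker_toPrincipalIdeal]

/-- `L/K` is a cyclic extension of number fields with Galois group generated by `σ`,
acting on invertible fractional ideals of `L` via `Fσ` (characterized by `hFσ`).
`H_L^G` is the group of `G`-invariant principal fractional ideals of `L`, `H̃_K` the
group of principal fractional ideals of `L` generated by elements of `K^×`, and
`Δ = {α ∈ L^× : α^{1-σ} ∈ E_L}`.  Then `(H_L^G : H̃_K) = (Δ : K^×·E_L)`. -/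
theorem index_principal_invariant_eq_index_Delta
    (K L : Type*) [Field K] [Field L] [NumberField K] [NumberField L]
    [Algebra K L] [IsGalois K L] [FiniteDimensional K L]
    (σ : L ≃ₐ[K] L) (hσ : ∀ τ : L ≃ₐ[K] L, τ ∈ Subgroup.zpowers σ)
    (Fσ : (FractionalIdeal (𝓞 L)⁰ L)ˣ ≃* (FractionalIdeal (𝓞 L)⁰ L)ˣ)
    (hFσ : ∀ (I : (FractionalIdeal (𝓞 L)⁰ L)ˣ) (x : L),
      x ∈ (Fσ I : FractionalIdeal (𝓞 L)⁰ L) ↔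
        ∃ y ∈ (I : FractionalIdeal (𝓞 L)⁰ L), σ y = x) :
    Subgroup.relIndex
        (((toPrincipalIdeal (𝓞 L) L).comp (Units.map (algebraMap K L).toMonoidHom)).range)
        ((toPrincipalIdeal (𝓞 L) L).range ⊓ fixedSubgroup Fσ)
      = Subgroup.relIndex
          ((Units.map (algebraMap K L).toMonoidHom).range ⊔
            (Units.map (algebraMap (𝓞 L) L).toMonoidHom).range)
          (Subgroup.comap
            (MonoidHom.id Lˣ * (Units.map σ.toRingEquiv.toMonoidHom)⁻¹)
            ((Units.map (algebraMap (𝓞 L) L).toMonoidHom).range)) :=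
  index_principal_invariant_eq_index_Delta_general K L σ Fσ hFσ
end
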